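/- arXiv:1609.01084 — 5 statements merged into one kernel-verified Lean document; each statement's English description precedes it below -/
import Mathlib

section
/- Let φ : [0,∞) → [0,∞) be locally integrable and translation uniform integrable in L¹_loc([0,∞)). Then for every α > 0 there exists K₀ > 0 such that for all s ≥ 0 and all 0 ≤ t₁ ≤ t₂: ∫_{t₁}^{t₂} e^{−α(t₂−t)} φ(t+s) dt ≤ K₀/α + 1/(1 − e^{−α}). -/
open MeasureTheory

/-- Translation uniform integrability in `L¹_loc([0,∞))`. -/
def TransUnifInt (φ : ℝ → ℝ) : Prop :=
  ∀ ε > (0 : ℝ), ∃ K₀ : ℝ, ∀ K ≥ K₀, ∀ t : ℝ, 0 ≤ t →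
    (∫ s in t..(t + 1), (if K ≤ |φ s| then |φ s| else 0)) ≤ ε

lemma tui_aux_int (φ : ℝ → ℝ)
    (hloc : ∀ T > (0 : ℝ), IntervalIntegrable φ volume 0 T)
    {a b : ℝ} (ha : 0 ≤ a) (hab : a ≤ b) :
    IntervalIntegrable φ volume a b := by
  refine (hloc (b + 1) (by linarith)).mono_set ?_
  rw [Set.uIcc_of_le hab, Set.uIcc_of_le (by linarith : (0:ℝ) ≤ b + 1)]
  exact Set.Icc_subset_Icc ha (by linarith)

lemma tui_aux_shift (φ : ℝ → ℝ)
    (hloc : ∀ T > (0 : ℝ), IntervalIntegrable φ volume 0 T)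
    {s a b : ℝ} (hs : 0 ≤ s) (ha : 0 ≤ a) (hab : a ≤ b) :
    IntervalIntegrable (fun t => φ (t + s)) volume a b := by
  have h := (tui_aux_int φ hloc (by linarith : (0:ℝ) ≤ a + s)
    (by linarith : a + s ≤ b + s)).comp_add_right s
  simpa using h

lemma tui_aux_unit (φ : ℝ → ℝ)
    (hloc : ∀ T > (0 : ℝ), IntervalIntegrable φ volume 0 T)
    (htui : TransUnifInt φ) :
    ∃ M : ℝ, 1 ≤ M ∧ ∀ a : ℝ, 0 ≤ a → (∫ t in a..(a + 1), φ t) ≤ M := by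
  obtain ⟨K₀, hK₀⟩ := htui 1 one_pos
  set K := max K₀ 1 with hKdef
  have hK1 : (1:ℝ) ≤ K := le_max_right _ _
  refine ⟨K + 1, by linarith, fun a ha => ?_⟩
  have htail := hK₀ K (le_max_left _ _) a ha
  have hφint : IntervalIntegrable φ volume a (a + 1) := tui_aux_int φ hloc ha (by linarith)
  have hmes : Measurable (fun x : ℝ => if K ≤ |x| then |x| else 0) := by
    exact Measurable.ite (measurableSet_le measurable_const measurable_abs)
      measurable_abs measurable_const
  have hgm : AEStronglyMeasurable (fun t => if K ≤ |φ t| then |φ t| else 0)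
      (volume.restrict (Set.uIoc a (a + 1))) := by
    have h1 : AEStronglyMeasurable φ (volume.restrict (Set.uIoc a (a + 1))) := by
      rw [Set.uIoc_of_le (by linarith : a ≤ a + 1)]
      exact hφint.aestronglyMeasurable
    exact (hmes.comp_aemeasurable h1.aemeasurable).aestronglyMeasurable
  have hgint : IntervalIntegrable (fun t => if K ≤ |φ t| then |φ t| else 0) volume a (a + 1) := by
    apply hφint.norm.mono_fun hgm
    filter_upwards with t
    by_cases h : K ≤ |φ t| <;> simp [h, abs_abs, abs_nonneg]
  have hmono : (∫ t in a..(a + 1), φ t)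
      ≤ ∫ t in a..(a + 1), (K + if K ≤ |φ t| then |φ t| else 0) := by
    apply intervalIntegral.integral_mono_on (by linarith) hφint
      (intervalIntegrable_const.add hgint)
    intro t _
    by_cases h : K ≤ |φ t|
    · simp only [h, if_true]
      have := le_abs_self (φ t); linarith
    · push_neg at h
      simp only [h.not_ge, if_false]
      have := le_abs_self (φ t); linarith
  have hsplit : (∫ t in a..(a + 1), (K + if K ≤ |φ t| then |φ t| else 0))
      = K + ∫ t in a..(a + 1), (if K ≤ |φ t| then |φ t| else 0) := by
    rw [intervalIntegral.integral_add intervalIntegrable_const hgint,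
      intervalIntegral.integral_const]
    simp
  linarith [hmono, hsplit ▸ hmono]

lemma tui_aux_short (φ : ℝ → ℝ)
    (hloc : ∀ T > (0 : ℝ), IntervalIntegrable φ volume 0 T)
    (hnn : ∀ t : ℝ, 0 ≤ t → 0 ≤ φ t)
    {α s M : ℝ} (hα : 0 < α) (hs : 0 ≤ s)
    (hM : ∀ a : ℝ, 0 ≤ a → (∫ t in a..(a + 1), φ t) ≤ M)
    {a b : ℝ} (ha : 0 ≤ a) (hab : a ≤ b) (hb1 : b ≤ a + 1) :
    (∫ t in a..b, Real.exp (-α * (b - t)) * φ (t + s)) ≤ M := by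
  have hshift : IntervalIntegrable (fun t => φ (t + s)) volume a b :=
    tui_aux_shift φ hloc hs ha hab
  have hprod : IntervalIntegrable (fun t => Real.exp (-α * (b - t)) * φ (t + s)) volume a b :=
    hshift.continuousOn_mul (Continuous.continuousOn (by continuity))
  have step1 : (∫ t in a..b, Real.exp (-α * (b - t)) * φ (t + s))
      ≤ ∫ t in a..b, φ (t + s) := by
    apply intervalIntegral.integral_mono_on hab hprod hshift
    intro t ht
    have hφnn : 0 ≤ φ (t + s) := hnn _ (by have := ht.1; linarith)
    have hexp : Real.exp (-α * (b - t)) ≤ 1 := by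
      rw [Real.exp_le_one_iff]
      nlinarith [ht.2]
    nlinarith [Real.exp_pos (-α * (b - t))]
  have step2 : (∫ t in a..b, φ (t + s)) = ∫ u in (a + s)..(b + s), φ u :=
    intervalIntegral.integral_comp_add_right φ s
  have step3 : (∫ u in (a + s)..(b + s), φ u) ≤ ∫ u in (a + s)..(a + s + 1), φ u := by
    have hi1 : IntervalIntegrable φ volume (a + s) (b + s) :=
      tui_aux_int φ hloc (by linarith) (by linarith)
    have hi2 : IntervalIntegrable φ volume (b + s) (a + s + 1) :=
      tui_aux_int φ hloc (by linarith) (by linarith)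
    have hadd := intervalIntegral.integral_add_adjacent_intervals hi1 hi2
    have hnn2 : (0:ℝ) ≤ ∫ u in (b + s)..(a + s + 1), φ u := by
      apply intervalIntegral.integral_nonneg (by linarith)
      intro u hu
      exact hnn u (by have := hu.1; linarith)
    linarith
  have := hM (a + s) (by linarith)
  linarith

lemma tui_aux_main (φ : ℝ → ℝ)
    (hloc : ∀ T > (0 : ℝ), IntervalIntegrable φ volume 0 T)
    (hnn : ∀ t : ℝ, 0 ≤ t → 0 ≤ φ t)
    {α s M : ℝ} (hα : 0 < α) (hs : 0 ≤ s) (hM1 : 1 ≤ M)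
    (hM : ∀ a : ℝ, 0 ≤ a → (∫ t in a..(a + 1), φ t) ≤ M) :
    ∀ N : ℕ, ∀ t₁ t₂ : ℝ, 0 ≤ t₁ → t₁ ≤ t₂ → t₂ ≤ t₁ + N →
      (∫ t in t₁..t₂, Real.exp (-α * (t₂ - t)) * φ (t + s)) ≤
        M * ∑ i ∈ Finset.range N, Real.exp (-α) ^ i := by
  intro N
  induction N with
  | zero =>
    intro t₁ t₂ h0 h12 h2
    have : t₂ = t₁ := le_antisymm (by simpa using h2) h12
    subst this
    simp
  | succ N ih =>
    intro t₁ t₂ h0 h12 h2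
    have hsumnn : (0:ℝ) ≤ ∑ i ∈ Finset.range N, Real.exp (-α) ^ i :=
      Finset.sum_nonneg fun i _ => pow_nonneg (Real.exp_pos _).le i
    rw [geom_sum_succ]
    have h2' : t₂ ≤ t₁ + N + 1 := by push_cast at h2; linarith
    by_cases hc : t₂ ≤ t₁ + 1
    · have hshort := tui_aux_short φ hloc hnn hα hs hM h0 h12 hc
      have hexp : (0:ℝ) < Real.exp (-α) := Real.exp_pos _
      have hpos : (0:ℝ) ≤ M * (Real.exp (-α) * ∑ i ∈ Finset.range N, Real.exp (-α) ^ i) :=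
        mul_nonneg (by linarith) (mul_nonneg hexp.le hsumnn)
      nlinarith
    · push_neg at hc
      set b := t₂ - 1 with hbdef
      have hb0 : 0 ≤ b := by simp only [hbdef]; linarith
      have h1b : t₁ ≤ b := by simp only [hbdef]; linarith
      have hint1 : IntervalIntegrable (fun t => Real.exp (-α * (t₂ - t)) * φ (t + s))
          volume t₁ b :=
        (tui_aux_shift φ hloc hs h0 h1b).continuousOn_mul (Continuous.continuousOn (by continuity))
      have hint2 : IntervalIntegrable (fun t => Real.exp (-α * (t₂ - t)) * φ (t + s))
          volume b t₂ :=
        (tui_aux_shift φ hloc hs hb0 (by rw [hbdef]; linarith)).continuousOn_mul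
          (Continuous.continuousOn (by continuity))
      have hadd := intervalIntegral.integral_add_adjacent_intervals hint1 hint2
      have heq : (∫ t in t₁..b, Real.exp (-α * (t₂ - t)) * φ (t + s))
          = Real.exp (-α) * ∫ t in t₁..b, Real.exp (-α * (b - t)) * φ (t + s) := by
        rw [← intervalIntegral.integral_const_mul]
        apply intervalIntegral.integral_congr
        intro t _
        show Real.exp (-α * (t₂ - t)) * φ (t + s)
            = Real.exp (-α) * (Real.exp (-α * (b - t)) * φ (t + s))
        have hx : -α * (t₂ - t) = -α + -α * (b - t) := by rw [hbdef]; ring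
        rw [hx, Real.exp_add]
        ring
      have hih := ih t₁ b h0 h1b (by rw [hbdef]; linarith)
      have hshort := tui_aux_short φ hloc hnn hα hs hM (a := b) (b := t₂) hb0
        (by rw [hbdef]; linarith) (by rw [hbdef]; linarith)
      have hexp : (0:ℝ) < Real.exp (-α) := Real.exp_pos _
      calc (∫ t in t₁..t₂, Real.exp (-α * (t₂ - t)) * φ (t + s))
          = (∫ t in t₁..b, Real.exp (-α * (t₂ - t)) * φ (t + s))
            + ∫ t in b..t₂, Real.exp (-α * (t₂ - t)) * φ (t + s) := hadd.symm
        _ ≤ Real.exp (-α) * (M * ∑ i ∈ Finset.range N, Real.exp (-α) ^ i) + M := by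
            rw [heq]
            have := mul_le_mul_of_nonneg_left hih hexp.le
            linarith
        _ = M * (Real.exp (-α) * ∑ i ∈ Finset.range N, Real.exp (-α) ^ i + 1) := by ring

/-- For a nonnegative, locally integrable t.u.i. function `φ`, the exponentially weighted
integrals of all shifts of `φ` are uniformly bounded by `K₀/α + 1/(1 - e^{-α})`. -/
theorem tui_exp_weighted_shift_bound
    (φ : ℝ → ℝ)
    (hloc : ∀ T > (0 : ℝ), IntervalIntegrable φ volume 0 T)
    (hnn : ∀ t : ℝ, 0 ≤ t → 0 ≤ φ t)
    (htui : TransUnifInt φ) :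
    ∀ α > (0 : ℝ), ∃ K₀ > (0 : ℝ), ∀ s : ℝ, 0 ≤ s → ∀ t₁ t₂ : ℝ, 0 ≤ t₁ → t₁ ≤ t₂ →
      (∫ t in t₁..t₂, Real.exp (-α * (t₂ - t)) * φ (t + s)) ≤
        K₀ / α + 1 / (1 - Real.exp (-α)) := by
  intro α hα
  obtain ⟨M, hM1, hM⟩ := tui_aux_unit φ hloc htui
  have hr0 : (0:ℝ) < Real.exp (-α) := Real.exp_pos _
  have hr1 : Real.exp (-α) < 1 := by
    rw [Real.exp_lt_one_iff]; linarith
  have hden : (0:ℝ) < 1 - Real.exp (-α) := by linarith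
  refine ⟨α * M / (1 - Real.exp (-α)), by positivity, fun s hs t₁ t₂ h0 h12 => ?_⟩
  set N : ℕ := ⌈t₂ - t₁⌉₊ with hN
  have hle : t₂ ≤ t₁ + N := by
    have := Nat.le_ceil (t₂ - t₁)
    simp only [hN]
    linarith
  have hmain := tui_aux_main φ hloc hnn hα hs hM1 hM N t₁ t₂ h0 h12 hle
  have hgeom : ∑ i ∈ Finset.range N, Real.exp (-α) ^ i ≤ 1 / (1 - Real.exp (-α)) := by
    rw [geom_sum_eq (ne_of_lt hr1)]
    have heq2 : (Real.exp (-α) ^ N - 1) / (Real.exp (-α) - 1)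
        = (1 - Real.exp (-α) ^ N) / (1 - Real.exp (-α)) := by
      rw [div_eq_div_iff (sub_ne_zero.mpr (ne_of_lt hr1)) (ne_of_gt hden)]
      ring
    rw [heq2]
    rw [div_le_div_iff_of_pos_right hden]
    nlinarith [pow_nonneg hr0.le N]
  have hKα : α * M / (1 - Real.exp (-α)) / α = M / (1 - Real.exp (-α)) := by
    field_simp
  rw [hKα]
  have : M * ∑ i ∈ Finset.range N, Real.exp (-α) ^ i ≤ M / (1 - Real.exp (-α)) := by
    rw [div_eq_mul_inv, ← one_div]
    exact mul_le_mul_of_nonneg_left hgeom (by linarith)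
  have hpos : (0:ℝ) ≤ 1 / (1 - Real.exp (-α)) := by positivity
  linarith
end

section
/- Let p ≥ 2, α₁ > 0, β > 0, and let c₁ : [0,∞) → [0,∞) be locally integrable and translation uniform integrable in L¹_loc([0,∞)). Then there exist constants c₃ > 0 and c₄ > 0, depending only on p, α₁, β, and c₁, with the following property: for every shift s ≥ 0, every continuous u : [0,∞) → [0,∞) and every locally integrable v : [0,∞) → [0,∞) satisfying u(t)^{p/2} ≤ β^p v(t) for almost every t ≥ 0 and u(t₂) − u(t₁) + α₁ ∫_{t₁}^{t₂} v(t) dt ≤ ∫_{t₁}^{t₂} c₁(t+s) dt for all 0 ≤ t₁ ≤ t₂, one has u(t) ≤ u(0) e^{−c₃ t} + c₄ for all t ≥ 0. -/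
open MeasureTheory

set_option maxHeartbeats 1600000 in
/-- Uniform dissipativity estimate (Theorem 3.1(a)): there are constants `c₃, c₄ > 0`,
uniform over all time shifts `s` of the t.u.i. datum `c₁`, such that every "energy" `u`
satisfying the energy inequality decays as `u(t) ≤ u(0) e^{-c₃ t} + c₄`. -/
theorem uniform_dissipativity_estimate
    (p α₁ β : ℝ) (hp : 2 ≤ p) (hα₁ : 0 < α₁) (hβ : 0 < β)
    (c₁ : ℝ → ℝ)
    (hc₁loc : ∀ T > (0 : ℝ), IntervalIntegrable c₁ volume 0 T)
    (hc₁nn : ∀ t : ℝ, 0 ≤ t → 0 ≤ c₁ t)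
    (hc₁tui : TransUnifInt c₁) :
    ∃ c₃ > (0 : ℝ), ∃ c₄ > (0 : ℝ),
      ∀ s : ℝ, 0 ≤ s →
      ∀ u : ℝ → ℝ, Continuous u → (∀ t : ℝ, 0 ≤ t → 0 ≤ u t) →
      ∀ v : ℝ → ℝ, (∀ T > (0 : ℝ), IntervalIntegrable v volume 0 T) →
        (∀ t : ℝ, 0 ≤ t → 0 ≤ v t) →
        (∀ᵐ t : ℝ, 0 ≤ t → u t ^ (p / 2) ≤ β ^ p * v t) →
        (∀ t₁ t₂ : ℝ, 0 ≤ t₁ → t₁ ≤ t₂ →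
          u t₂ - u t₁ + α₁ * ∫ t in t₁..t₂, v t ≤ ∫ t in t₁..t₂, c₁ (t + s)) →
        ∀ t : ℝ, 0 ≤ t → u t ≤ u 0 * Real.exp (-c₃ * t) + c₄ := by
  -- basic constants
  obtain ⟨B, hBdef⟩ : ∃ B : ℝ, B = β ^ p := ⟨_, rfl⟩
  have hB : 0 < B := hBdef ▸ Real.rpow_pos_of_pos hβ p
  obtain ⟨γ, hγdef⟩ : ∃ γ : ℝ, γ = α₁ / B := ⟨_, rfl⟩
  have hγ : 0 < γ := hγdef ▸ div_pos hα₁ hB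
  have hγB : γ * B = α₁ := by rw [hγdef]; exact div_mul_cancel₀ _ hB.ne'
  -- uniform bound on unit integrals of c₁
  obtain ⟨K₀, hK₀⟩ := hc₁tui 1 one_pos
  obtain ⟨K, hKdef⟩ : ∃ K : ℝ, K = max K₀ 0 := ⟨_, rfl⟩
  have hKnn : 0 ≤ K := hKdef ▸ le_max_right _ _
  have hKK₀ : K₀ ≤ K := hKdef ▸ le_max_left _ _
  obtain ⟨M, hMdef⟩ : ∃ M : ℝ, M = K + 1 := ⟨_, rfl⟩
  have hM : 0 < M := by rw [hMdef]; linarith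
  -- local integrability of c₁ on any subinterval of [0,∞)
  have intc1 : ∀ a b : ℝ, 0 ≤ a → a ≤ b → IntervalIntegrable c₁ volume a b := by
    intro a b ha hab
    refine (hc₁loc (b + 1) (by linarith)).mono_set ?_
    rw [Set.uIcc_of_le hab, Set.uIcc_of_le (by linarith : (0:ℝ) ≤ b + 1)]
    exact Set.Icc_subset_Icc ha (by linarith)
  -- integrability of the truncation
  have trunc_int : ∀ a : ℝ, 0 ≤ a →
      IntervalIntegrable (fun x => if K ≤ |c₁ x| then |c₁ x| else 0) volume a (a + 1) := by
    intro a ha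
    have hc := intc1 a (a + 1) ha (by linarith)
    rw [intervalIntegrable_iff_integrableOn_Ioc_of_le (by linarith : a ≤ a + 1)] at hc ⊢
    have h1 : AEMeasurable c₁ (volume.restrict (Set.Ioc a (a + 1))) :=
      hc.aestronglyMeasurable.aemeasurable
    have h2 : Measurable fun y : ℝ => if K ≤ |y| then |y| else 0 := by
      exact Measurable.ite (measurableSet_le measurable_const measurable_abs)
        measurable_abs measurable_const
    have hm : AEStronglyMeasurable (fun x => if K ≤ |c₁ x| then |c₁ x| else 0)
        (volume.restrict (Set.Ioc a (a + 1))) :=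
      (h2.comp_aemeasurable h1).aestronglyMeasurable
    refine hc.abs.mono' hm ?_
    filter_upwards with x
    by_cases h : K ≤ |c₁ x| <;> simp [h, abs_nonneg]
  -- uniform unit-interval bound
  have unit : ∀ a : ℝ, 0 ≤ a → (∫ x in a..(a + 1), c₁ x) ≤ M := by
    intro a ha
    have h1 : (∫ x in a..(a + 1), c₁ x)
        ≤ ∫ x in a..(a + 1), (K + if K ≤ |c₁ x| then |c₁ x| else 0) := by
      refine intervalIntegral.integral_mono_on (by linarith) (intc1 a (a + 1) ha (by linarith))
        ((intervalIntegrable_const).add (trunc_int a ha)) ?_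
      intro x _
      by_cases h : K ≤ |c₁ x|
      · simp only [h, if_true]; linarith [le_abs_self (c₁ x)]
      · push_neg at h; simp only [h.not_ge, if_false]; linarith [le_abs_self (c₁ x)]
    rw [intervalIntegral.integral_add intervalIntegrable_const (trunc_int a ha),
      intervalIntegral.integral_const] at h1
    have h2 := hK₀ K hKK₀ a ha
    simp only [add_sub_cancel_left, one_smul] at h1
    rw [hMdef]; linarith
  -- bound on subintervals of unit length
  have seg : ∀ a b : ℝ, 0 ≤ a → a ≤ b → b ≤ a + 1 → (∫ x in a..b, c₁ x) ≤ M := by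
    intro a b ha hab hba
    have hadd := intervalIntegral.integral_add_adjacent_intervals
      (intc1 a b ha hab) (intc1 b (a + 1) (le_trans ha hab) hba)
    have h2 : 0 ≤ ∫ x in b..(a + 1), c₁ x :=
      intervalIntegral.integral_nonneg hba (fun x hx => hc₁nn x (by linarith [hx.1]))
    linarith [unit a ha]
  -- choose c₃
  have hlog2 : 0 < Real.log 2 := Real.log_pos (by norm_num)
  obtain ⟨c₃, hc₃def⟩ : ∃ c₃ : ℝ, c₃ = min (γ / 2) (Real.log 2 / 2) := ⟨_, rfl⟩
  have hc₃ : 0 < c₃ := hc₃def ▸ lt_min (by linarith) (by linarith)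
  have expfact : ∀ h : ℝ, 0 ≤ h → h ≤ 1 → Real.exp (c₃ * h) ≤ 1 + γ * h := by
    intro h h0 h1
    have hx0 : 0 ≤ c₃ * h := by positivity
    have hxl : c₃ * h ≤ Real.log 2 := by
      have : c₃ ≤ Real.log 2 / 2 := hc₃def ▸ min_le_right _ _
      nlinarith
    have h2 : Real.exp (c₃ * h) ≤ 2 := by
      calc Real.exp (c₃ * h) ≤ Real.exp (Real.log 2) := Real.exp_le_exp.2 hxl
        _ = 2 := Real.exp_log (by norm_num)
    have h3 : (1 - c₃ * h) * Real.exp (c₃ * h) ≤ 1 := by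
      have := Real.add_one_le_exp (-(c₃ * h))
      have hee : Real.exp (-(c₃ * h)) * Real.exp (c₃ * h) = 1 := by
        rw [← Real.exp_add]; simp
      nlinarith [Real.exp_pos (c₃ * h)]
    have hcγ : 2 * c₃ ≤ γ := by
      have : c₃ ≤ γ / 2 := hc₃def ▸ min_le_left _ _
      linarith
    nlinarith [Real.exp_pos (c₃ * h)]
  -- remaining constants
  have hec : Real.exp (-c₃) < 1 := Real.exp_lt_one_iff.2 (by linarith)
  have hecnn : 0 < Real.exp (-c₃) := Real.exp_pos _
  obtain ⟨D, hDdef⟩ : ∃ D : ℝ, D = 2 * M + 1 := ⟨_, rfl⟩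
  have hD : 0 < D := by rw [hDdef]; linarith
  obtain ⟨S, hSdef⟩ : ∃ S : ℝ, S = D / (1 - Real.exp (-c₃)) := ⟨_, rfl⟩
  have hS : 0 < S := hSdef ▸ div_pos hD (by linarith)
  have hDS : D = S * (1 - Real.exp (-c₃)) := by
    rw [hSdef]
    exact (div_mul_cancel₀ _ (by linarith : (1:ℝ) - Real.exp (-c₃) ≠ 0)).symm
  refine ⟨c₃, hc₃, S + D, by linarith, ?_⟩
  intro s hs u hu hunn v hvloc hvnn hpc henergy
  -- local integrability of v
  have intv : ∀ a b : ℝ, 0 ≤ a → a ≤ b → IntervalIntegrable v volume a b := by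
    intro a b ha hab
    refine (hvloc (b + 1) (by linarith)).mono_set ?_
    rw [Set.uIcc_of_le hab, Set.uIcc_of_le (by linarith : (0:ℝ) ≤ b + 1)]
    exact Set.Icc_subset_Icc ha (by linarith)
  -- shifted c₁ bound
  have hshift : ∀ a b : ℝ, 0 ≤ a → a ≤ b → b ≤ a + 1 → (∫ x in a..b, c₁ (x + s)) ≤ M := by
    intro a b ha hab hba
    rw [intervalIntegral.integral_comp_add_right]
    exact seg (a + s) (b + s) (by linarith) (by linarith) (by linarith)
  -- pointwise comparison a.e.
  have hae : ∀ᵐ r : ℝ, 0 ≤ r → u r - 1 ≤ B * v r := by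
    filter_upwards [hpc] with r hr hr0
    have hu0 := hunn r hr0
    rw [← hBdef] at hr
    have h1 : u r - 1 ≤ u r ^ (p / 2) := by
      rcases le_or_gt (u r) 1 with h | h
      · have := Real.rpow_nonneg hu0 (p / 2); linarith
      · calc u r - 1 ≤ u r := by linarith
          _ = u r ^ (1:ℝ) := (Real.rpow_one _).symm
          _ ≤ u r ^ (p / 2) := Real.rpow_le_rpow_of_exponent_le h.le (by linarith)
    linarith [hr hr0]
  -- the one-step estimate
  have step : ∀ t h : ℝ, 0 ≤ t → 0 < h → h ≤ 1 →
      u (t + h) ≤ u t * Real.exp (-(c₃ * h)) + D := by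
    intro t h ht hh hh1
    -- pointwise lower bound for u on [t, t+h]
    have h1 : ∀ r ∈ Set.Icc t (t + h), u (t + h) - M ≤ u r := by
      intro r hr
      have hr0 : 0 ≤ r := le_trans ht hr.1
      have hE := henergy r (t + h) hr0 hr.2
      have hv0 : 0 ≤ ∫ x in r..(t + h), v x :=
        intervalIntegral.integral_nonneg hr.2 (fun x hx => hvnn x (le_trans hr0 hx.1))
      have hc : (∫ x in r..(t + h), c₁ (x + s)) ≤ M :=
        hshift r (t + h) hr0 hr.2 (by linarith [hr.1])
      linarith [mul_nonneg hα₁.le hv0]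
    -- integral lower bound for ∫ u
    have h2 : h * (u (t + h) - M) ≤ ∫ r in t..(t + h), u r := by
      have := intervalIntegral.integral_mono_on (μ := volume) (by linarith : t ≤ t + h)
        (intervalIntegrable_const (c := u (t + h) - M))
        (hu.intervalIntegrable t (t + h)) h1
      rwa [intervalIntegral.integral_const, add_sub_cancel_left, smul_eq_mul] at this
    -- a.e. comparison on the interval
    have h3 : (∫ r in t..(t + h), (u r - 1)) ≤ ∫ r in t..(t + h), B * v r := by
      refine intervalIntegral.integral_mono_ae_restrict (by linarith)
        ((hu.intervalIntegrable t (t + h)).sub intervalIntegrable_const)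
        ((intv t (t + h) ht (by linarith)).const_mul B) ?_
      filter_upwards [ae_restrict_of_ae hae, ae_restrict_mem measurableSet_Icc] with r ha hmem
      exact ha (le_trans ht hmem.1)
    rw [intervalIntegral.integral_sub (hu.intervalIntegrable t (t + h)) intervalIntegrable_const,
      intervalIntegral.integral_const, add_sub_cancel_left, smul_eq_mul, mul_one,
      intervalIntegral.integral_const_mul] at h3
    -- energy inequality on [t, t+h]
    have hE := henergy t (t + h) ht (by linarith)
    have hc : (∫ x in t..(t + h), c₁ (x + s)) ≤ M := hshift t (t + h) ht (by linarith) (by linarith)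
    -- combine: (1 + γ h) u(t+h) ≤ u t + γ h M + γ h + M
    have hmul : γ * (h * (u (t + h) - M) - h) ≤ α₁ * ∫ r in t..(t + h), v r := by
      have h4 : h * (u (t + h) - M) - h ≤ B * ∫ r in t..(t + h), v r := by linarith
      calc γ * (h * (u (t + h) - M) - h) ≤ γ * (B * ∫ r in t..(t + h), v r) :=
            mul_le_mul_of_nonneg_left h4 hγ.le
        _ = α₁ * ∫ r in t..(t + h), v r := by rw [← mul_assoc, hγB]
    have key : u (t + h) * (1 + γ * h) ≤ u t + γ * h * M + γ * h + M := by nlinarith [hmul, hE, hc]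
    -- conclude
    have hexp := expfact h hh.le hh1
    have hee : Real.exp (-(c₃ * h)) * Real.exp (c₃ * h) = 1 := by
      rw [← Real.exp_add]; simp
    have hA : (0:ℝ) < 1 + γ * h := by positivity
    have hue : 0 ≤ u t * Real.exp (-(c₃ * h)) :=
      mul_nonneg (hunn t ht) (Real.exp_pos _).le
    have h7 : u t * Real.exp (-(c₃ * h)) * Real.exp (c₃ * h)
        ≤ u t * Real.exp (-(c₃ * h)) * (1 + γ * h) := mul_le_mul_of_nonneg_left hexp hue
    have h8 : u t * Real.exp (-(c₃ * h)) * Real.exp (c₃ * h) = u t := by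
      rw [mul_assoc, hee, mul_one]
    have h9 : u t + γ * h * M + γ * h + M
        ≤ (u t * Real.exp (-(c₃ * h)) + D) * (1 + γ * h) := by
      have hD2 : D * (γ * h) = 2 * (M * (γ * h)) + γ * h := by rw [hDdef]; ring
      nlinarith [h7, h8, hD2, hDdef, mul_nonneg (mul_nonneg hM.le hγ.le) hh.le]
    have h10 : u (t + h) * (1 + γ * h) ≤ (u t * Real.exp (-(c₃ * h)) + D) * (1 + γ * h) :=
      le_trans key h9
    exact le_of_mul_le_mul_right h10 hA
  -- discrete decay at integers
  have natbound : ∀ n : ℕ, u n ≤ u 0 * Real.exp (-(c₃ * n)) + S := by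
    intro n
    induction n with
    | zero => simp; linarith [hS]
    | succ n ih =>
      have hstep := step (n : ℝ) 1 (Nat.cast_nonneg n) one_pos le_rfl
      have hu0 := hunn 0 le_rfl
      have hgoal : u ((n : ℝ) + 1) ≤ u 0 * Real.exp (-(c₃ * ((n : ℝ) + 1))) + S := by
        have hexpadd : Real.exp (-(c₃ * ((n : ℝ) + 1)))
            = Real.exp (-(c₃ * n)) * Real.exp (-(c₃ * 1)) := by
          rw [← Real.exp_add]; ring_nf
        have h1 : u ((n : ℝ) + 1) ≤ (u 0 * Real.exp (-(c₃ * n)) + S) * Real.exp (-(c₃ * 1)) + D := by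
          calc u ((n : ℝ) + 1) ≤ u n * Real.exp (-(c₃ * 1)) + D := hstep
            _ ≤ (u 0 * Real.exp (-(c₃ * n)) + S) * Real.exp (-(c₃ * 1)) + D := by
                have hpos := (Real.exp_pos (-(c₃ * 1))).le
                nlinarith [mul_le_mul_of_nonneg_right ih hpos]
        have he1 : Real.exp (-(c₃ * 1)) = Real.exp (-c₃) := by norm_num
        rw [he1] at h1
        rw [hexpadd, he1]
        nlinarith [h1, hDS]

      push_cast
      exact hgoal
  -- final: arbitrary t
  intro t ht
  set n : ℕ := ⌊t⌋₊ with hndef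
  have hn1 : (n : ℝ) ≤ t := Nat.floor_le ht
  have hn2 : t < n + 1 := Nat.lt_floor_add_one t
  have hu0 := hunn 0 le_rfl
  have hexp_t : Real.exp (-c₃ * t) = Real.exp (-(c₃ * n)) * Real.exp (-(c₃ * (t - n))) := by
    rw [← Real.exp_add]; ring_nf
  rcases eq_or_lt_of_le hn1 with heq | hlt
  · -- t = n
    have : u t ≤ u 0 * Real.exp (-(c₃ * t)) + S := by
      rw [← heq]; exact natbound n
    have : u t ≤ u 0 * Real.exp (-c₃ * t) + S := by rw [neg_mul]; exact this
    linarith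
  · -- t = n + h with 0 < h < 1
    have hh : 0 < t - n := by linarith
    have hh1 : t - n ≤ 1 := by linarith
    have hstep := step (n : ℝ) (t - n) (Nat.cast_nonneg n) hh hh1
    rw [add_sub_cancel] at hstep
    have hexp1 : Real.exp (-(c₃ * (t - n))) ≤ 1 := by
      rw [Real.exp_le_one_iff]
      nlinarith
    have := natbound n
    have hepos := Real.exp_pos (-(c₃ * (t - n)))
    calc u t ≤ u n * Real.exp (-(c₃ * (t - n))) + D := hstep
      _ ≤ (u 0 * Real.exp (-(c₃ * n)) + S) * Real.exp (-(c₃ * (t - n))) + D := by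
          nlinarith [mul_le_mul_of_nonneg_right this hepos.le]
      _ ≤ u 0 * Real.exp (-c₃ * t) + (S + D) := by
          rw [hexp_t]
          nlinarith [mul_le_mul_of_nonneg_left hexp1 hS.le,
            mul_nonneg hu0 (Real.exp_pos (-(c₃ * n))).le]
end

section
/- Let p ≥ 2, α₁ > 0, α₂ > 0, R > 0, let c₁, c₂ : [0,∞) → [0,∞) be locally integrable and translation uniform integrable in L¹_loc([0,∞)), and fix 0 ≤ t₁ < t₂. Then there exists a constant C > 0 such that: for every s ≥ 0, every continuous u : [0,∞) → [0,R], and all locally integrable v, w : [0,∞) → [0,∞) satisfying, for all t₁ ≤ a ≤ b ≤ t₂, u(b) − u(a) + α₁ ∫_a^b v(t) dt ≤ ∫_a^b c₁(t+s) dt and ∫_a^b w(t) dt ≤ α₂ ∫_a^b v(t) dt + ∫_a^b c₂(t+s) dt, one has ∫_{t₁}^{t₂} v(t) dt ≤ C and ∫_{t₁}^{t₂} w(t) dt ≤ C. -/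
open MeasureTheory

/-- A nonnegative, locally integrable, t.u.i. function has uniformly bounded shifted
integrals over a fixed interval. -/
lemma tui_uniform_shift_bound (φ : ℝ → ℝ)
    (hloc : ∀ T > (0 : ℝ), IntervalIntegrable φ volume 0 T)
    (hnn : ∀ t : ℝ, 0 ≤ t → 0 ≤ φ t) (htui : TransUnifInt φ)
    (t₁ t₂ : ℝ) (ht₁ : 0 ≤ t₁) (h12 : t₁ ≤ t₂) :
    ∃ M : ℝ, 0 ≤ M ∧ ∀ s : ℝ, 0 ≤ s → (∫ t in t₁..t₂, φ (t + s)) ≤ M := by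
  obtain ⟨K₀, hK₀⟩ := htui 1 one_pos
  set K : ℝ := max K₀ 0 with hKdef
  have hK0 : 0 ≤ K := le_max_right _ _
  have hii : ∀ a b : ℝ, 0 ≤ a → a ≤ b → IntervalIntegrable φ volume a b := by
    intro a b ha hab
    have hb : 0 ≤ b := ha.trans hab
    refine (hloc (b + 1) (by linarith)).mono_set ?_
    rw [Set.uIcc_of_le hab, Set.uIcc_of_le (by linarith : (0:ℝ) ≤ b + 1)]
    exact Set.Icc_subset_Icc ha (by linarith)
  -- unit interval bound
  have hunit : ∀ t : ℝ, 0 ≤ t → (∫ x in t..(t + 1), φ x) ≤ 1 + K := by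
    intro t ht
    have hint : IntervalIntegrable φ volume t (t + 1) := hii t (t + 1) ht (by linarith)
    set f : ℝ → ℝ := fun y => if K ≤ |y| then |y| else 0 with hfdef
    have hfmeas : Measurable f := by
      apply Measurable.ite (measurableSet_le measurable_const measurable_abs)
        measurable_abs measurable_const
    have hφmeas : AEStronglyMeasurable φ (volume.restrict (Set.uIoc t (t + 1))) := by
      rw [Set.uIoc_of_le (by linarith : t ≤ t + 1)]
      exact hint.1.aestronglyMeasurable
    have hg : IntervalIntegrable (fun x => f (φ x)) volume t (t + 1) := by
      refine hint.mono_fun ((hfmeas.comp_aemeasurable hφmeas.aemeasurable).aestronglyMeasurable) ?_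
      filter_upwards with x
      simp only [hfdef, Real.norm_eq_abs]
      split <;> simp [abs_abs, abs_nonneg]
    have hgK : IntervalIntegrable (fun x => f (φ x) + K) volume t (t + 1) :=
      hg.add intervalIntegrable_const
    have hmono : (∫ x in t..(t + 1), φ x) ≤ ∫ x in t..(t + 1), (f (φ x) + K) := by
      apply intervalIntegral.integral_mono_on (by linarith) hint hgK
      intro x _
      simp only [hfdef]
      split_ifs with h
      · have := le_abs_self (φ x); linarith
      · push_neg at h; have := le_abs_self (φ x); linarith
    have hsplit : (∫ x in t..(t + 1), (f (φ x) + K))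
        = (∫ x in t..(t + 1), f (φ x)) + (∫ x in t..(t + 1), (K : ℝ)) :=
      intervalIntegral.integral_add hg intervalIntegrable_const
    have htail : (∫ x in t..(t + 1), f (φ x)) ≤ 1 := hK₀ K (le_max_left _ _) t ht
    have hconst : (∫ x in t..(t + 1), (K : ℝ)) = K := by
      simp
    rw [hsplit, hconst] at hmono
    linarith
  -- multi-interval bound by induction
  have hstep : ∀ m : ℕ, ∀ a : ℝ, 0 ≤ a → (∫ x in a..(a + m), φ x) ≤ m * (1 + K) := by
    intro m
    induction m with
    | zero => intro a ha; simp
    | succ m ih =>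
        intro a ha
        have h1 : IntervalIntegrable φ volume a (a + m) :=
          hii a (a + m) ha (by have : (0:ℝ) ≤ m := Nat.cast_nonneg m; linarith)
        have h2 : IntervalIntegrable φ volume (a + m) (a + m + 1) :=
          hii (a + m) (a + m + 1) (by positivity) (by linarith)
        have hadj : (∫ x in a..(a + m), φ x) + (∫ x in (a + m)..(a + m + 1), φ x)
            = ∫ x in a..(a + m + 1), φ x :=
          intervalIntegral.integral_add_adjacent_intervals h1 h2
        have hb := hunit (a + m) (by positivity)
        have heq : a + ((m : ℝ) + 1) = a + m + 1 := by ring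
        have := ih a ha
        calc (∫ x in a..(a + ((m : ℕ) + 1 : ℕ)), φ x)
            = ∫ x in a..(a + m + 1), φ x := by push_cast; rw [heq]
          _ ≤ m * (1 + K) + (1 + K) := by rw [← hadj]; linarith
          _ = ((m : ℕ) + 1 : ℕ) * (1 + K) := by push_cast; ring
  set n : ℕ := ⌈t₂ - t₁⌉₊ with hndef
  refine ⟨n * (1 + K), by positivity, ?_⟩
  intro s hs
  rw [intervalIntegral.integral_comp_add_right]
  set a : ℝ := t₁ + s with hadef
  have ha : 0 ≤ a := by positivity
  have hb : t₂ + s ≤ a + n := by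
    have := Nat.le_ceil (t₂ - t₁)
    simp only [hadef]
    linarith
  have hab : a ≤ t₂ + s := by simp only [hadef]; linarith
  have h1 : IntervalIntegrable φ volume a (t₂ + s) := hii a (t₂ + s) ha hab
  have h2 : IntervalIntegrable φ volume (t₂ + s) (a + n) :=
    hii (t₂ + s) (a + n) (by linarith) hb
  have hadj : (∫ x in a..(t₂ + s), φ x) + (∫ x in (t₂ + s)..(a + n), φ x)
      = ∫ x in a..(a + n), φ x :=
    intervalIntegral.integral_add_adjacent_intervals h1 h2
  have hpos : 0 ≤ ∫ x in (t₂ + s)..(a + n), φ x := by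
    apply intervalIntegral.integral_nonneg hb
    intro x hx
    exact hnn x (le_trans (by linarith) hx.1)
  have := hstep n a ha
  linarith

/-- Uniform boundedness in `W_{t₁,t₂}` of shifted solution families: under (A1)-(A2) type
inequalities with t.u.i. data `c₁, c₂`, the integrals of `v` ("`‖y‖^p_V`") and `w`
("`‖y'‖^q_{V*}`") over `[t₁, t₂]` are bounded by a constant `C` uniform in the shift `s`. -/
theorem uniform_W_bound
    (p α₁ α₂ R : ℝ) (hp : 2 ≤ p) (hα₁ : 0 < α₁) (hα₂ : 0 < α₂) (hR : 0 < R)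
    (c₁ c₂ : ℝ → ℝ)
    (hc₁loc : ∀ T > (0 : ℝ), IntervalIntegrable c₁ volume 0 T)
    (hc₂loc : ∀ T > (0 : ℝ), IntervalIntegrable c₂ volume 0 T)
    (hc₁nn : ∀ t : ℝ, 0 ≤ t → 0 ≤ c₁ t) (hc₂nn : ∀ t : ℝ, 0 ≤ t → 0 ≤ c₂ t)
    (hc₁tui : TransUnifInt c₁) (hc₂tui : TransUnifInt c₂)
    (t₁ t₂ : ℝ) (ht₁ : 0 ≤ t₁) (ht₁₂ : t₁ < t₂) :
    ∃ C > (0 : ℝ),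
      ∀ s : ℝ, 0 ≤ s →
      ∀ u : ℝ → ℝ, Continuous u → (∀ t : ℝ, 0 ≤ t → 0 ≤ u t ∧ u t ≤ R) →
      ∀ v w : ℝ → ℝ,
        (∀ T > (0 : ℝ), IntervalIntegrable v volume 0 T) →
        (∀ T > (0 : ℝ), IntervalIntegrable w volume 0 T) →
        (∀ t : ℝ, 0 ≤ t → 0 ≤ v t) → (∀ t : ℝ, 0 ≤ t → 0 ≤ w t) →
        (∀ a b : ℝ, t₁ ≤ a → a ≤ b → b ≤ t₂ →
          u b - u a + α₁ * ∫ t in a..b, v t ≤ ∫ t in a..b, c₁ (t + s)) →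
        (∀ a b : ℝ, t₁ ≤ a → a ≤ b → b ≤ t₂ →
          (∫ t in a..b, w t) ≤ α₂ * ∫ t in a..b, v t + ∫ t in a..b, c₂ (t + s)) →
        (∫ t in t₁..t₂, v t) ≤ C ∧ (∫ t in t₁..t₂, w t) ≤ C := by
  obtain ⟨M₁, hM₁0, hM₁⟩ :=
    tui_uniform_shift_bound c₁ hc₁loc hc₁nn hc₁tui t₁ t₂ ht₁ ht₁₂.le
  obtain ⟨M₂, hM₂0, hM₂⟩ :=
    tui_uniform_shift_bound c₂ hc₂loc hc₂nn hc₂tui t₁ t₂ ht₁ ht₁₂.le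
  obtain ⟨C₁, hC₁def⟩ : ∃ x : ℝ, x = (M₁ + R) / α₁ := ⟨_, rfl⟩
  have hC₁0 : 0 ≤ C₁ := by rw [hC₁def]; exact div_nonneg (by linarith) hα₁.le
  have hC₂0 : 0 ≤ α₂ * (C₁ + (t₂ - t₁) * M₂) := by
    have : 0 ≤ (t₂ - t₁) * M₂ := mul_nonneg (by linarith) hM₂0
    exact mul_nonneg hα₂.le (by linarith)
  refine ⟨C₁ + α₂ * (C₁ + (t₂ - t₁) * M₂) + 1, by linarith, ?_⟩
  intro s hs u hu huR v w hvloc hwloc hvnn hwnn hA1 hA2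
  have ht₂ : 0 ≤ t₂ := ht₁.trans ht₁₂.le
  have h1 := hA1 t₁ t₂ le_rfl ht₁₂.le le_rfl
  have h2 := hA2 t₁ t₂ le_rfl ht₁₂.le le_rfl
  have hu1 := huR t₁ ht₁
  have hu2 := huR t₂ ht₂
  have hb1 : (∫ t in t₁..t₂, c₁ (t + s)) ≤ M₁ := hM₁ s hs
  have hb2 : (∫ t in t₁..t₂, c₂ (t + s)) ≤ M₂ := hM₂ s hs
  have hv : (∫ t in t₁..t₂, v t) ≤ C₁ := by
    rw [hC₁def, le_div_iff₀ hα₁, mul_comm]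
    linarith
  have hvInt : IntervalIntegrable v volume t₁ t₂ := by
    refine (hvloc (t₂ + 1) (by linarith)).mono_set ?_
    rw [Set.uIcc_of_le ht₁₂.le, Set.uIcc_of_le (by linarith : (0:ℝ) ≤ t₂ + 1)]
    exact Set.Icc_subset_Icc ht₁ (by linarith)
  have hD0 : 0 ≤ ∫ r in t₁..t₂, c₂ (r + s) := by
    apply intervalIntegral.integral_nonneg ht₁₂.le
    intro x hx
    exact hc₂nn _ (by have := hx.1; linarith)
  have hsplit2 : (∫ t in t₁..t₂, (v t + ∫ r in t₁..t₂, c₂ (r + s)))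
      = (∫ t in t₁..t₂, v t) + (t₂ - t₁) * ∫ r in t₁..t₂, c₂ (r + s) := by
    rw [intervalIntegral.integral_add hvInt intervalIntegrable_const,
        intervalIntegral.integral_const, smul_eq_mul, mul_comm]
  have hw : (∫ t in t₁..t₂, w t) ≤ α₂ * (C₁ + (t₂ - t₁) * M₂) := by
    refine h2.trans (mul_le_mul_of_nonneg_left ?_ hα₂.le)
    rw [hsplit2]
    have := mul_le_mul_of_nonneg_left hb2 (by linarith : (0:ℝ) ≤ t₂ - t₁)
    linarith
  constructor <;> linarith
end

section
/- Let H be a real Hilbert space, 0 ≤ a₀ < a ≤ b, and let f_n, f : [a₀,b] → H be continuous. Assume: (i) for every h ∈ H, the real functions t ↦ ⟨f_n(t), h⟩ converge uniformly on [a₀,b] to t ↦ ⟨f(t), h⟩; (ii) f_n(t) → f(t) strongly in H for almost every t ∈ [a₀,b]; (iii) there exist continuous nondecreasing functions g_n : [a₀,b] → ℝ and a continuous function g : [a₀,b] → ℝ with g_n(t) → g(t) for every t ∈ [a₀,b], such that for each n the function t ↦ ‖f_n(t)‖² − g_n(t) is nonincreasing on [a₀,b]. Then f_n → f uniformly on [a,b],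 i.e. sup_{t∈[a,b]} ‖f_n(t) − f(t)‖ → 0 as n → ∞. -/
/-!
Near a point `t > a₀`, pick `s < t` where `fₙ(s) → f(s)` (such points are dense) and `s' ≥ t`.
For `u` between them, the two monotonicity assumptions give
`‖fₙ(u)‖² ≤ (‖fₙ(s)‖² − gₙ(s)) + gₙ(s')`, whose limit is close to `‖f(u)‖²` by continuity of
`‖f‖²` and `g`; so `limsup ‖fₙ‖² ≤ ‖f‖²` locally uniformly. Together with uniform weak
convergence this gives `‖fₙ − f‖² = ‖fₙ‖² − ‖f‖² + 2⟪f − fₙ, f⟫ → 0` locally uniformly on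
`(a₀, b]`, hence uniformly on the compact `[a, b]`.
-/

open MeasureTheory Filter Set Topology
open scoped InnerProductSpace

theorem frequently_nhdsLT_of_ae {X : Type*} [LinearOrder X] [TopologicalSpace X]
    [OrderTopology X] [DenselyOrdered X] [NoMinOrder X] [MeasurableSpace X] {μ : Measure X}
    [μ.IsOpenPosMeasure] {p : X → Prop} {S : Set X} {t : X} (hp : ∀ᵐ x ∂μ, x ∈ S → p x)
    (hS : S ∈ 𝓝[<] t) :
    ∃ᶠ x in 𝓝[<] t, p x := by
  refine frequently_iff.2 fun hU => ?_
  obtain ⟨l, hl, hsub⟩ := mem_nhdsLT_iff_exists_Ioo_subset.1 (inter_mem hU hS)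
  obtain ⟨x, hxp, hx⟩ := (Measure.dense_of_ae hp).exists_between hl
  exact ⟨x, (hsub hx).1, hxp (hsub hx).2⟩

theorem frequently_eventually_le_nhdsWithin_Icc {a b t : ℝ} (ht : t ∈ Icc a b) :
    ∃ᶠ s in 𝓝[Icc a b] t, ∀ᶠ u in 𝓝[Icc a b] t, u ≤ s := by
  refine frequently_iff.2 fun hU => ?_
  obtain ⟨δ, hδ, hsub⟩ := Metric.mem_nhdsWithin_iff.1 hU
  have hts : t < t + δ / 2 := by linarith
  have hs : min (t + δ / 2) b ∈ Metric.ball t δ := by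
    rw [Metric.mem_ball, Real.dist_eq, abs_lt]
    constructor <;> linarith [min_le_left (t + δ / 2) b, le_min hts.le ht.2]
  refine ⟨_, hsub ⟨hs, ht.1.trans (le_min hts.le ht.2), min_le_right _ _⟩, ?_⟩
  filter_upwards [eventually_mem_nhdsWithin, mem_nhdsWithin_of_mem_nhds (gt_mem_nhds hts)]
    with u hu hut
  exact le_min hut.le hu.2

theorem eventually_dist_lt_of_norm_sq_le_of_inner_le {α E : Type*} [NormedAddCommGroup E]
    [InnerProductSpace ℝ E] {L : Filter α} {x y : α → E}
    (hnorm : ∀ ε > 0, ∀ᶠ i in L, ‖x i‖ ^ 2 ≤ ‖y i‖ ^ 2 + ε)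
    (hinner : ∀ ε > 0, ∀ᶠ i in L, ⟪y i - x i, y i⟫_ℝ ≤ ε) :
    ∀ ε > 0, ∀ᶠ i in L, dist (y i) (x i) < ε := by
  intro ε hε
  filter_upwards [hnorm (ε ^ 2 / 3) (by positivity), hinner (ε ^ 2 / 4) (by positivity)]
    with i hx hxy
  have hsq : ‖y i - x i‖ ^ 2 = ‖x i‖ ^ 2 - ‖y i‖ ^ 2 + 2 * ⟪y i - x i, y i⟫_ℝ := by
    rw [norm_sub_sq_real, inner_sub_left, real_inner_self_eq_norm_sq, real_inner_comm]
    ring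
  rw [dist_eq_norm]
  exact lt_of_pow_lt_pow_left₀ 2 hε.le (by linarith [pow_pos hε 2])

theorem tendstoUniformlyOnFilter_nhdsWithin_of_norm_sq_le_of_weak {ι X E : Type*}
    [TopologicalSpace X] [NormedAddCommGroup E] [InnerProductSpace ℝ E] {l : Filter ι}
    {S : Set X} {t : X} {F : ι → X → E} {f : X → E} (hf : ContinuousWithinAt f S t)
    (hweak : TendstoUniformlyOnFilter (fun n u => ⟪F n u, f t⟫_ℝ) (fun u => ⟪f u, f t⟫_ℝ) l
      (𝓝[S] t))
    (hnorm : ∀ ε > 0, ∀ᶠ p in l ×ˢ 𝓝[S] t, ‖F p.1 p.2‖ ^ 2 ≤ ‖f p.2‖ ^ 2 + ε) :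
    TendstoUniformlyOnFilter F f l (𝓝[S] t) := by
  refine Metric.tendstoUniformlyOnFilter_iff.2
    (eventually_dist_lt_of_norm_sq_le_of_inner_le hnorm fun ε hε => ?_)
  set C := 2 * ‖f t‖ + 3
  have hC : 0 < C := by positivity
  have hfnear : ∀ r > 0, ∀ᶠ p in l ×ˢ 𝓝[S] t, dist (f p.2) (f t) < r := fun r hr =>
    (hf.eventually_mem (Metric.ball_mem_nhds _ hr)).prod_inr l
  have hbound : ∀ᶠ p in l ×ˢ 𝓝[S] t, ‖f p.2 - F p.1 p.2‖ ≤ C := by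
    filter_upwards [hnorm 1 one_pos, hfnear 1 one_pos] with p hFp hfp
    have hf1 : ‖f p.2‖ ≤ ‖f t‖ + 1 := by
      linarith [norm_le_norm_add_norm_sub' (f p.2) (f t), dist_eq_norm (f p.2) (f t)]
    have hF1 : ‖F p.1 p.2‖ ≤ ‖f p.2‖ + 1 :=
      le_of_pow_le_pow_left₀ two_ne_zero (by positivity) (by nlinarith [norm_nonneg (f p.2)])
    linarith [norm_sub_le (f p.2) (F p.1 p.2)]
  filter_upwards [Metric.tendstoUniformlyOnFilter_iff.1 hweak (ε / 2) (half_pos hε),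
    hfnear (ε / (2 * C)) (by positivity), hbound] with p hw hfp hb
  have hsplit : ⟪f p.2 - F p.1 p.2, f p.2⟫_ℝ
      = (⟪f p.2, f t⟫_ℝ - ⟪F p.1 p.2, f t⟫_ℝ) + ⟪f p.2 - F p.1 p.2, f p.2 - f t⟫_ℝ := by
    rw [inner_sub_right, inner_sub_left (f p.2) (F p.1 p.2) (f t)]
    ring
  have hsmall : ⟪f p.2 - F p.1 p.2, f p.2 - f t⟫_ℝ ≤ ε / 2 :=
    calc ⟪f p.2 - F p.1 p.2, f p.2 - f t⟫_ℝ ≤ ‖f p.2 - F p.1 p.2‖ * ‖f p.2 - f t‖ :=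
          real_inner_le_norm _ _
      _ ≤ C * (ε / (2 * C)) :=
          mul_le_mul hb (dist_eq_norm (f p.2) (f t) ▸ hfp).le (norm_nonneg _) hC.le
      _ = ε / 2 := by field_simp
  linarith [(abs_lt.1 (Real.dist_eq _ _ ▸ hw)).2]

theorem eventually_le_add_of_antitoneOn_sub {ι : Type*} {l : Filter ι} {e gn : ι → ℝ → ℝ}
    {e' g : ℝ → ℝ} {a b t : ℝ} (ht : t ∈ Ioc a b)
    (hanti : ∀ n, AntitoneOn (fun u => e n u - gn n u) (Icc a b))
    (hmono : ∀ n, MonotoneOn (gn n) (Icc a b))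
    (hgn : ∀ u ∈ Icc a b, Tendsto (fun n => gn n u) l (𝓝 (g u)))
    (hg : ContinuousWithinAt g (Icc a b) t) (he : ContinuousWithinAt e' (Icc a b) t)
    (hconv : ∃ᶠ s in 𝓝[<] t, Tendsto (fun n => e n s) l (𝓝 (e' s))) :
    ∀ ε > 0, ∀ᶠ p in l ×ˢ 𝓝[Icc a b] t, e p.1 p.2 ≤ e' p.2 + ε := by
  intro ε hε
  have hε5 : 0 < ε / 5 := by positivity
  have hnear : ∀ᶠ u in 𝓝[Icc a b] t,
      u ∈ Icc a b ∧ |e' u - e' t| < ε / 5 ∧ |g u - g t| < ε / 5 :=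
    eventually_mem_nhdsWithin.and ((he.eventually_mem (Metric.ball_mem_nhds _ hε5)).and
      (hg.eventually_mem (Metric.ball_mem_nhds _ hε5)))
  have hleft : 𝓝[<] t ≤ 𝓝[Icc a b] t := nhdsWithin_le_of_mem (Icc_mem_nhdsLT_of_mem ht)
  obtain ⟨s, hs, ⟨hsS, hse, hsg⟩, hst⟩ :=
    (hconv.and_eventually ((hnear.filter_mono hleft).and eventually_mem_nhdsWithin)).exists
  obtain ⟨s', hs'u, hs'S, -, hs'g⟩ :=
    ((frequently_eventually_le_nhdsWithin_Icc (Ioc_subset_Icc_self ht)).and_eventually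
      hnear).exists
  have hlim : Tendsto (fun n => e n s - gn n s + gn n s') l (𝓝 (e' s - g s + g s')) :=
    (hs.sub (hgn s hsS)).add (hgn s' hs'S)
  filter_upwards [(hlim.eventually (gt_mem_nhds (lt_add_of_pos_right _ hε5))).prod_inl _,
    (hnear.and (hs'u.and (mem_nhdsWithin_of_mem_nhds (lt_mem_nhds (mem_Iio.1 hst))))).prod_inr l]
    with ⟨n, u⟩ hn ⟨⟨huS, hue, _⟩, hus', hsu⟩
  calc e n u ≤ e n s - gn n s + gn n u := by linarith [hanti n hsS huS hsu.le]
    _ ≤ e n s - gn n s + gn n s' := by linarith [hmono n huS hs'S hus']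
    _ ≤ e' u + ε := by
      linarith [(abs_lt.1 hse).2, (abs_lt.1 hue).1, (abs_lt.1 hsg).1, (abs_lt.1 hs'g).2]

theorem uniform_strong_convergence_of_energy_general
    {H : Type*} [NormedAddCommGroup H] [InnerProductSpace ℝ H]
    (a₀ a b : ℝ) (ha : a₀ < a)
    (fn : ℕ → ℝ → H) (f : ℝ → H)
    (hfCont : ContinuousOn f (Set.Icc a₀ b))
    (hweak : ∀ h : H, TendstoUniformlyOn
      (fun n t => (inner ℝ (fn n t) h : ℝ)) (fun t => (inner ℝ (f t) h : ℝ))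
      atTop (Set.Icc a₀ b))
    (hae : ∀ᵐ t : ℝ, t ∈ Set.Icc a₀ b → Tendsto (fun n => fn n t) atTop (nhds (f t)))
    (henergy : ∃ (gn : ℕ → ℝ → ℝ) (g : ℝ → ℝ),
      (∀ n, ContinuousOn (gn n) (Set.Icc a₀ b)) ∧
      (∀ n, MonotoneOn (gn n) (Set.Icc a₀ b)) ∧
      ContinuousOn g (Set.Icc a₀ b) ∧
      (∀ t ∈ Set.Icc a₀ b, Tendsto (fun n => gn n t) atTop (nhds (g t))) ∧
      (∀ n, AntitoneOn (fun t => ‖fn n t‖ ^ 2 - gn n t) (Set.Icc a₀ b))) :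
    TendstoUniformlyOn fn f atTop (Set.Icc a b) := by
  obtain ⟨gn, g, -, hgnMono, hgCont, hgnTend, hanti⟩ := henergy
  have hlocal : TendstoLocallyUniformlyOn fn f atTop (Ioc a₀ b) := by
    refine tendstoLocallyUniformlyOn_iff_filter.2 fun t ht => ?_
    have htS : t ∈ Icc a₀ b := Ioc_subset_Icc_self ht
    have hstrong : ∃ᶠ s in 𝓝[<] t, Tendsto (fun n => fn n s) atTop (𝓝 (f s)) :=
      frequently_nhdsLT_of_ae hae (Icc_mem_nhdsLT_of_mem ht)
    have hnorm := eventually_le_add_of_antitoneOn_sub (e := fun n u => ‖fn n u‖ ^ 2) ht hanti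
      hgnMono hgnTend (hgCont t htS) ((hfCont t htS).norm.pow 2)
      (hstrong.mono fun s hs => hs.norm.pow 2)
    have hweak_t := (hweak (f t)).tendstoUniformlyOnFilter.mono_right
      (le_principal_iff.2 (self_mem_nhdsWithin (a := t)))
    exact (tendstoUniformlyOnFilter_nhdsWithin_of_norm_sq_le_of_weak (hfCont t htS) hweak_t
      hnorm).mono_right (nhdsWithin_mono _ Ioc_subset_Icc_self)
  exact (tendstoLocallyUniformlyOn_iff_tendstoUniformlyOn_of_compact isCompact_Icc).1
    (hlocal.mono fun u hu => ⟨ha.trans_le hu.1, hu.2⟩)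

/-- Strong-convergence upgrade in a Hilbert space: uniform weak convergence on `[a₀,b]`,
a.e. strong convergence, and an energy-monotonicity structure (`‖fₙ(t)‖² − gₙ(t)`
nonincreasing with `gₙ → g` pointwise, `gₙ` nondecreasing continuous) imply uniform strong
convergence on every subinterval `[a,b]` with `a₀ < a`. -/
theorem uniform_strong_convergence_of_energy
    {H : Type*} [NormedAddCommGroup H] [InnerProductSpace ℝ H] [CompleteSpace H]
    (a₀ a b : ℝ) (ha₀ : 0 ≤ a₀) (ha : a₀ < a) (hab : a ≤ b)
    (fn : ℕ → ℝ → H) (f : ℝ → H)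
    (hfnCont : ∀ n, ContinuousOn (fn n) (Set.Icc a₀ b))
    (hfCont : ContinuousOn f (Set.Icc a₀ b))
    (hweak : ∀ h : H, TendstoUniformlyOn
      (fun n t => (inner ℝ (fn n t) h : ℝ)) (fun t => (inner ℝ (f t) h : ℝ))
      atTop (Set.Icc a₀ b))
    (hae : ∀ᵐ t : ℝ, t ∈ Set.Icc a₀ b → Tendsto (fun n => fn n t) atTop (nhds (f t)))
    (henergy : ∃ (gn : ℕ → ℝ → ℝ) (g : ℝ → ℝ),
      (∀ n, ContinuousOn (gn n) (Set.Icc a₀ b)) ∧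
      (∀ n, MonotoneOn (gn n) (Set.Icc a₀ b)) ∧
      ContinuousOn g (Set.Icc a₀ b) ∧
      (∀ t ∈ Set.Icc a₀ b, Tendsto (fun n => gn n t) atTop (nhds (g t))) ∧
      (∀ n, AntitoneOn (fun t => ‖fn n t‖ ^ 2 - gn n t) (Set.Icc a₀ b))) :
    TendstoUniformlyOn fn f atTop (Set.Icc a b) :=
  uniform_strong_convergence_of_energy_general a₀ a b ha fn f hfCont hweak hae henergy
end

section
/- Let α > 0, γ > 0, let β : [0,∞) → [0,∞) be locally integrable, let ρ : [0,∞) → [0,∞) be continuous, and let w : [0,∞) → [0,∞) be locally integrable with w(ξ) ≥ γ (ρ(ξ) − 1) for almost every ξ ≥ 0. Assume that for all 0 ≤ s ≤ t: ρ(t) − ρ(s) + 2α ∫_s^t w(ξ) dξ ≤ 2 ∫_s^t β(ξ) dξ. Then for all 0 ≤ s ≤ t: ρ(t) ≤ ρ(s) e^{−2αγ(t−s)} + 2 ∫_s^t ( β(ξ) + αγ ) e^{−2αγ(t−ξ)} dξ. -/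
/-!
With `c = 2αγ` and `g = 2(β + αγ)`, the energy inequality and `w ≥ γ(ρ - 1)` give
`ρ(t) - ρ(u) + c ∫_u^t ρ ≤ ∫_u^t g` for all `s ≤ u ≤ t`. This is an integrated form of
`ρ' + cρ ≤ g`, and Gronwall's argument goes through without differentiating `ρ`: multiply the
inequality at `u` by `c e^{cu}`, integrate over `u ∈ [s, t]` and add `e^{cs}` times the case
`u = s`. By Fubini the double integrals collapse, leaving
`e^{ct} ρ(t) ≤ e^{cs} ρ(s) + ∫_s^t e^{cξ} g(ξ) dξ`.
-/

open MeasureTheory Set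

lemma integral_mul_exp_mul (c a b : ℝ) :
    ∫ u in a..b, c * Real.exp (c * u) = Real.exp (c * b) - Real.exp (c * a) := by
  refine intervalIntegral.integral_eq_sub_of_hasDerivAt (f := fun u => Real.exp (c * u))
    (fun u _ => ?_)
    ((by fun_prop : Continuous fun u => c * Real.exp (c * u)).intervalIntegrable _ _)
  simpa [mul_comm] using ((hasDerivAt_id u).const_mul c).exp

lemma intervalIntegral_mul_integral_swap {k f : ℝ → ℝ} {s t : ℝ} (hst : s ≤ t)
    (hk : IntegrableOn k (Ioc s t)) (hf : IntegrableOn f (Ioc s t)) :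
    ∫ u in s..t, k u * ∫ ξ in u..t, f ξ = ∫ ξ in s..t, (∫ u in s..ξ, k u) * f ξ := by
  set μ := volume.restrict (Ioc s t)
  set F : ℝ → ℝ → ℝ := fun u ξ => {p : ℝ × ℝ | p.1 < p.2}.indicator (fun p => k p.1 * f p.2) (u, ξ)
  have hF : Integrable (Function.uncurry F) (μ.prod μ) :=
    (hk.mul_prod hf).indicator (measurableSet_lt measurable_fst measurable_snd)
  have h_left : ∀ u ∈ Ioc s t, k u * ∫ ξ in u..t, f ξ = ∫ ξ, F u ξ ∂μ := by
    intro u hu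
    have : ∀ ξ, F u ξ = (Ioi u).indicator (fun ξ => k u * f ξ) ξ := fun ξ => by
      simp [F, indicator_apply]
    simp_rw [this, μ, integral_indicator measurableSet_Ioi,
      Measure.restrict_restrict measurableSet_Ioi, inter_comm, Ioc_inter_Ioi, max_eq_right hu.1.le,
      intervalIntegral.integral_of_le hu.2, integral_const_mul]
  have h_right : ∀ ξ ∈ Ioc s t, ∫ u, F u ξ ∂μ = (∫ u in s..ξ, k u) * f ξ := by
    intro ξ hξ
    have : ∀ u, F u ξ = (Iio ξ).indicator (fun u => k u * f ξ) u := fun u => by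
      simp [F, indicator_apply]
    have hdom : Iio ξ ∩ Ioc s t = Ioo s ξ := by
      ext u
      simp only [mem_inter_iff, mem_Iio, mem_Ioc, mem_Ioo]
      exact ⟨fun h => ⟨h.2.1, h.1⟩, fun h => ⟨h.2, h.1, h.2.le.trans hξ.2⟩⟩
    simp_rw [this, μ, integral_indicator measurableSet_Iio,
      Measure.restrict_restrict measurableSet_Iio, hdom, integral_mul_const,
      ← integral_Ioc_eq_integral_Ioo, intervalIntegral.integral_of_le hξ.1.le]
  rw [intervalIntegral.integral_of_le hst, intervalIntegral.integral_of_le hst,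
    setIntegral_congr_fun measurableSet_Ioc h_left, integral_integral_swap hF,
    setIntegral_congr_fun measurableSet_Ioc h_right]

lemma exp_mul_integral_add_integral_mul_exp_mul_integral {f : ℝ → ℝ} {s t : ℝ} (c : ℝ)
    (hst : s ≤ t) (hf : IntervalIntegrable f volume s t) :
    Real.exp (c * s) * (∫ ξ in s..t, f ξ) +
        ∫ u in s..t, c * Real.exp (c * u) * ∫ ξ in u..t, f ξ =
      ∫ ξ in s..t, Real.exp (c * ξ) * f ξ := by
  have hexp : Continuous fun ξ => Real.exp (c * ξ) := by fun_prop
  simp_rw [intervalIntegral_mul_integral_swap hst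
      ((by fun_prop : Continuous fun u => c * Real.exp (c * u)).integrableOn_Ioc)
      hf.1, integral_mul_exp_mul, sub_mul,
    intervalIntegral.integral_sub (hf.continuousOn_mul hexp.continuousOn) (hf.const_mul _),
    intervalIntegral.integral_const_mul]
  ring

lemma exp_mul_mul_le_of_sub_le_integral {ρ f : ℝ → ℝ} {c s t : ℝ} (hc : 0 ≤ c) (hst : s ≤ t)
    (hρ : IntervalIntegrable ρ volume s t) (hf : IntervalIntegrable f volume s t)
    (h : ∀ u ∈ Icc s t, ρ t - ρ u ≤ ∫ ξ in u..t, f ξ) :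
    Real.exp (c * t) * ρ t ≤
      Real.exp (c * s) * ρ s + ∫ ξ in s..t, Real.exp (c * ξ) * (f ξ + c * ρ ξ) := by
  have hexp : Continuous fun u => Real.exp (c * u) := by fun_prop
  have hE : Continuous fun u => c * Real.exp (c * u) := by fun_prop
  have hF : ContinuousOn (fun u => ∫ ξ in u..t, f ξ) (uIcc s t) :=
    intervalIntegral.continuousOn_primitive_interval_left
      (by rw [uIcc_of_le hst, integrableOn_Icc_iff_integrableOn_Ioc]; exact hf.1)
  have hnonneg : 0 ≤ Real.exp (c * s) * ((∫ ξ in s..t, f ξ) - (ρ t - ρ s)) +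
      ∫ u in s..t, c * Real.exp (c * u) * ((∫ ξ in u..t, f ξ) - (ρ t - ρ u)) :=
    add_nonneg (mul_nonneg (Real.exp_pos _).le (sub_nonneg.2 (h s ⟨le_rfl, hst⟩)))
      (intervalIntegral.integral_nonneg hst fun u hu =>
        mul_nonneg (by positivity) (sub_nonneg.2 (h u hu)))
  have hsplit : ∫ u in s..t, c * Real.exp (c * u) * ((∫ ξ in u..t, f ξ) - (ρ t - ρ u)) =
      (∫ u in s..t, c * Real.exp (c * u) * ∫ ξ in u..t, f ξ) -
        (Real.exp (c * t) - Real.exp (c * s)) * ρ t +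
        c * ∫ u in s..t, Real.exp (c * u) * ρ u := by
    have hI1 : IntervalIntegrable (fun u => c * Real.exp (c * u) * ∫ ξ in u..t, f ξ) volume s t :=
      (hE.continuousOn.mul hF).intervalIntegrable
    have hI3 : IntervalIntegrable (fun u => Real.exp (c * u) * ρ u) volume s t :=
      hρ.continuousOn_mul hexp.continuousOn
    have hI2 : IntervalIntegrable (fun u => c * Real.exp (c * u) * ρ t) volume s t :=
      (hE.mul continuous_const).intervalIntegrable _ _
    simp_rw [show ∀ u, c * Real.exp (c * u) * ((∫ ξ in u..t, f ξ) - (ρ t - ρ u)) =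
        c * Real.exp (c * u) * (∫ ξ in u..t, f ξ) - c * Real.exp (c * u) * ρ t +
          c * (Real.exp (c * u) * ρ u) from fun u => by ring]
    rw [intervalIntegral.integral_add (hI1.sub hI2) (hI3.const_mul c),
      intervalIntegral.integral_sub hI1 hI2, intervalIntegral.integral_mul_const,
      integral_mul_exp_mul, intervalIntegral.integral_const_mul]
  have hsum : ∫ ξ in s..t, Real.exp (c * ξ) * (f ξ + c * ρ ξ) =
      (∫ ξ in s..t, Real.exp (c * ξ) * f ξ) + c * ∫ ξ in s..t, Real.exp (c * ξ) * ρ ξ := by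
    simp_rw [mul_add, mul_left_comm (Real.exp _) c]
    rw [intervalIntegral.integral_add (hf.continuousOn_mul hexp.continuousOn)
      ((hρ.continuousOn_mul hexp.continuousOn).const_mul c), intervalIntegral.integral_const_mul]
  rw [hsplit] at hnonneg
  rw [hsum, ← exp_mul_integral_add_integral_mul_exp_mul_integral c hst hf]
  linarith

lemma le_mul_exp_add_integral_of_sub_add_integral_le {ρ g : ℝ → ℝ} {c s t : ℝ} (hc : 0 ≤ c)
    (hst : s ≤ t) (hρ : IntervalIntegrable ρ volume s t) (hg : IntervalIntegrable g volume s t)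
    (h : ∀ u ∈ Icc s t, ρ t - ρ u + c * ∫ ξ in u..t, ρ ξ ≤ ∫ ξ in u..t, g ξ) :
    ρ t ≤ ρ s * Real.exp (-c * (t - s)) + ∫ ξ in s..t, g ξ * Real.exp (-c * (t - ξ)) := by
  have hsub : ∀ u ∈ Icc s t, ρ t - ρ u ≤ ∫ ξ in u..t, (g ξ - c * ρ ξ) := fun u hu => by
    have hut : uIcc u t ⊆ uIcc s t := by
      rw [uIcc_of_le hu.2, uIcc_of_le hst]; exact Icc_subset_Icc_left hu.1
    rw [intervalIntegral.integral_sub (hg.mono_set hut) ((hρ.mono_set hut).const_mul c),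
      intervalIntegral.integral_const_mul]
    linarith [h u hu]
  have key := exp_mul_mul_le_of_sub_le_integral hc hst hρ (hg.sub (hρ.const_mul c)) hsub
  simp_rw [sub_add_cancel] at key
  have hexp : ∀ x, Real.exp (-c * (t - x)) = Real.exp (-(c * t)) * Real.exp (c * x) := fun x => by
    rw [← Real.exp_add]; ring_nf
  simp_rw [hexp, ← mul_assoc, mul_comm _ (Real.exp (-(c * t))), mul_assoc,
    intervalIntegral.integral_const_mul]
  calc ρ t = Real.exp (-(c * t)) * (Real.exp (c * t) * ρ t) := by
        rw [← mul_assoc, ← Real.exp_add, neg_add_cancel, Real.exp_zero, one_mul]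
    _ ≤ _ := by
        rw [← mul_add]
        gcongr
        simpa only [mul_comm] using key

lemma sub_add_mul_integral_le_integral_of_energy_ineq {α γ : ℝ} (hα : 0 ≤ α) {β ρ w : ℝ → ℝ}
    {u t : ℝ} (hut : u ≤ t) (hβ : IntervalIntegrable β volume u t)
    (hρ : IntervalIntegrable ρ volume u t) (hw : IntervalIntegrable w volume u t)
    (hwρ : (fun ξ => γ * (ρ ξ - 1)) ≤ᵐ[volume.restrict (Icc u t)] w)
    (h : ρ t - ρ u + 2 * α * ∫ ξ in u..t, w ξ ≤ 2 * ∫ ξ in u..t, β ξ) :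
    ρ t - ρ u + 2 * α * γ * ∫ ξ in u..t, ρ ξ ≤ ∫ ξ in u..t, 2 * (β ξ + α * γ) := by
  have hγρ : γ * ((∫ ξ in u..t, ρ ξ) - (t - u)) ≤ ∫ ξ in u..t, w ξ := by
    have := intervalIntegral.integral_mono_ae_restrict hut
      ((hρ.sub intervalIntegrable_const).const_mul γ) hw hwρ
    rwa [intervalIntegral.integral_const_mul, intervalIntegral.integral_sub hρ
      intervalIntegrable_const, intervalIntegral.integral_const, smul_eq_mul, mul_one] at this
  rw [intervalIntegral.integral_const_mul, intervalIntegral.integral_add hβ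
    intervalIntegrable_const, intervalIntegral.integral_const, smul_eq_mul]
  linarith [mul_le_mul_of_nonneg_left hγρ (by positivity : (0 : ℝ) ≤ 2 * α)]

lemma intervalIntegrable_of_forall_intervalIntegrable_zero {f : ℝ → ℝ}
    (hf : ∀ T > (0 : ℝ), IntervalIntegrable f volume 0 T) {a b : ℝ} (ha : 0 ≤ a) (hab : a ≤ b) :
    IntervalIntegrable f volume a b := by
  obtain rfl | hab := hab.eq_or_lt
  · exact .refl
  refine (hf b (ha.trans_lt hab)).mono_set ?_
  rw [uIcc_of_le hab.le, uIcc_of_le (ha.trans hab.le)]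
  exact Icc_subset_Icc_left ha

theorem apriori_estimate_evolution_inclusion_general
    (α γ : ℝ) (hα : 0 < α) (hγ : 0 < γ)
    (β : ℝ → ℝ) (hβloc : ∀ T > (0 : ℝ), IntervalIntegrable β volume 0 T)
    (ρ : ℝ → ℝ) (hρCont : Continuous ρ)
    (w : ℝ → ℝ) (hwloc : ∀ T > (0 : ℝ), IntervalIntegrable w volume 0 T)
    (hwρ : ∀ᵐ ξ : ℝ, 0 ≤ ξ → γ * (ρ ξ - 1) ≤ w ξ)
    (hineq : ∀ s t : ℝ, 0 ≤ s → s ≤ t →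
      ρ t - ρ s + 2 * α * ∫ ξ in s..t, w ξ ≤ 2 * ∫ ξ in s..t, β ξ) :
    ∀ s t : ℝ, 0 ≤ s → s ≤ t →
      ρ t ≤ ρ s * Real.exp (-2 * α * γ * (t - s)) +
        2 * ∫ ξ in s..t, (β ξ + α * γ) * Real.exp (-2 * α * γ * (t - ξ)) := by
  intro s t hs hst
  have hβ : ∀ u ∈ Icc s t, IntervalIntegrable β volume u t := fun u hu =>
    intervalIntegrable_of_forall_intervalIntegrable_zero hβloc (hs.trans hu.1) hu.2
  have hw : ∀ u ∈ Icc s t, IntervalIntegrable w volume u t := fun u hu =>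
    intervalIntegrable_of_forall_intervalIntegrable_zero hwloc (hs.trans hu.1) hu.2
  have hgronwall := le_mul_exp_add_integral_of_sub_add_integral_le (c := 2 * α * γ)
    (g := fun ξ => 2 * (β ξ + α * γ)) (by positivity) hst (hρCont.intervalIntegrable _ _)
    ((hβ s ⟨le_rfl, hst⟩).add intervalIntegrable_const |>.const_mul 2) fun u hu =>
      sub_add_mul_integral_le_integral_of_energy_ineq hα.le hu.2 (hβ u hu)
        (hρCont.intervalIntegrable _ _) (hw u hu)
        ((ae_restrict_iff' measurableSet_Icc).2
          (hwρ.mono fun ξ hξ hξu => hξ (hs.trans (hu.1.trans hξu.1))))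
        (hineq u t (hs.trans hu.1) hu.2)
  simp_rw [← intervalIntegral.integral_const_mul, ← mul_assoc, neg_mul] at hgronwall ⊢
  exact hgronwall

/-- A priori estimate (eq. (4.7) of the paper): from the cumulative energy inequality
`ρ(t) − ρ(s) + 2α ∫_s^t w ≤ 2 ∫_s^t β` and the pointwise bound `w ≥ γ(ρ − 1)` one deduces
`ρ(t) ≤ ρ(s) e^{−2αγ(t−s)} + 2 ∫_s^t (β(ξ) + αγ) e^{−2αγ(t−ξ)} dξ`. -/
theorem apriori_estimate_evolution_inclusion
    (α γ : ℝ) (hα : 0 < α) (hγ : 0 < γ)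
    (β : ℝ → ℝ) (hβloc : ∀ T > (0 : ℝ), IntervalIntegrable β volume 0 T)
    (hβnn : ∀ t : ℝ, 0 ≤ t → 0 ≤ β t)
    (ρ : ℝ → ℝ) (hρCont : Continuous ρ) (hρnn : ∀ t : ℝ, 0 ≤ t → 0 ≤ ρ t)
    (w : ℝ → ℝ) (hwloc : ∀ T > (0 : ℝ), IntervalIntegrable w volume 0 T)
    (hwnn : ∀ t : ℝ, 0 ≤ t → 0 ≤ w t)
    (hwρ : ∀ᵐ ξ : ℝ, 0 ≤ ξ → γ * (ρ ξ - 1) ≤ w ξ)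
    (hineq : ∀ s t : ℝ, 0 ≤ s → s ≤ t →
      ρ t - ρ s + 2 * α * ∫ ξ in s..t, w ξ ≤ 2 * ∫ ξ in s..t, β ξ) :
    ∀ s t : ℝ, 0 ≤ s → s ≤ t →
      ρ t ≤ ρ s * Real.exp (-2 * α * γ * (t - s)) +
        2 * ∫ ξ in s..t, (β ξ + α * γ) * Real.exp (-2 * α * γ * (t - ξ)) :=
  apriori_estimate_evolution_inclusion_general α γ hα hγ β hβloc ρ hρCont w hwloc hwρ hineq
end
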